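/- Assume Γ* is nonempty. Then for every η > 0: X_src ⊆ (∂O_η) ∩ (∂K_src), X_dst ⊆ (∂O_η) ∩ (∂K_dst), and Γ* ⊆ cl(O_η). -/

import Mathlib

open Set Metric MeasureTheory
open scoped ENNReal

noncomputable section

/-- Points of the `d`-dimensional Euclidean space. -/
abbrev Pt (d : ℕ) := EuclideanSpace ℝ (Fin d)

/-- A control: a measurable map valued in the unit sphere. -/
def IsControl {d : ℕ} (α : ℝ → Pt d) : Prop :=
  Measurable α ∧ ∀ t, ‖α t‖ = 1

/-- Admissible trajectory (in integral form, i.e. an absolutely continuous solution of the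
controlled ODE) with control `α`, constrained to stay in `K`, with direction sign `σ`
(`σ = 1`: forward dynamics `y' = f(y,α)·α`; `σ = -1`: reverse dynamics `y' = -f(y,α)·α`),
starting at `x`, with horizon `τ`. -/
def IsTrajCtrl {d : ℕ} (K : Set (Pt d)) (f : Pt d → Pt d → ℝ) (σ : ℝ)
    (x : Pt d) (τ : ℝ) (y α : ℝ → Pt d) : Prop :=
  0 ≤ τ ∧ y 0 = x ∧ (∀ t ∈ Icc 0 τ, y t ∈ K) ∧ IsControl α ∧
    ∀ t ∈ Icc 0 τ, y t = x + ∫ s in (0:ℝ)..t, (σ * f (y s) (α s)) • α s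

/-- Admissible trajectory, for some control. -/
def IsTraj {d : ℕ} (K : Set (Pt d)) (f : Pt d → Pt d → ℝ) (σ : ℝ)
    (x : Pt d) (τ : ℝ) (y : ℝ → Pt d) : Prop :=
  ∃ α, IsTrajCtrl K f σ x τ y α

/-- Set of horizons of admissible trajectories from `x` ending in `target`. -/
def reachTimes {d : ℕ} (K : Set (Pt d)) (f : Pt d → Pt d → ℝ) (σ : ℝ)
    (target : Set (Pt d)) (x : Pt d) : Set ℝ :=
  {τ | ∃ y : ℝ → Pt d, IsTraj K f σ x τ y ∧ y τ ∈ target}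

/-- Minimum time, `∞` if the target is unreachable (`inf ∅ = ∞`). -/
def minTime {d : ℕ} (K : Set (Pt d)) (f : Pt d → Pt d → ℝ) (σ : ℝ)
    (target : Set (Pt d)) (x : Pt d) : ℝ≥0∞ :=
  ⨅ τ ∈ reachTimes K f σ target x, ENNReal.ofReal τ

/-- Kruzkov transform `1 - e^{-T}`, with the convention `e^{-∞} = 0`. -/
def kruzkov (T : ℝ≥0∞) : ℝ := if T = ∞ then 1 else 1 - Real.exp (-T.toReal)

/-- Value function (Kruzkov transform of the minimum time). -/
def val {d : ℕ} (K : Set (Pt d)) (f : Pt d → Pt d → ℝ) (σ : ℝ)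
    (target : Set (Pt d)) (x : Pt d) : ℝ :=
  kruzkov (minTime K f σ target x)

/-- Geodesic points from `x`: points `y(t)` of optimal trajectories from `x` to `target`. -/
def geodPts {d : ℕ} (K : Set (Pt d)) (f : Pt d → Pt d → ℝ) (σ : ℝ)
    (target : Set (Pt d)) (x : Pt d) : Set (Pt d) :=
  {p | ∃ τ y, IsTraj K f σ x τ y ∧ y τ ∈ target ∧
    ENNReal.ofReal τ = minTime K f σ target x ∧ ∃ t ∈ Icc 0 τ, p = y t}

/-- δ-geodesic points from `x`: points `y(t)` of δ-optimal trajectories from `x` to `target`. -/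
def deltaGeodPts {d : ℕ} (K : Set (Pt d)) (f : Pt d → Pt d → ℝ) (σ : ℝ)
    (target : Set (Pt d)) (x : Pt d) (δ : ℝ) : Set (Pt d) :=
  {p | ∃ τ y, IsTraj K f σ x τ y ∧ y τ ∈ target ∧
    1 - Real.exp (-τ) ≤ val K f σ target x + δ ∧ ∃ t ∈ Icc 0 τ, p = y t}

/-- The setting of the minimum time problem: a nonempty bounded open domain `Ω ⊆ ℝ^d` with
`d ≥ 1`, a positive continuous bounded Lipschitz speed function `f` on `cl(Ω) × S₁`, and two
disjoint nonempty compact subsets `K_src, K_dst` of `Ω`. -/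
structure Setting (d : ℕ) where
  Ω : Set (Pt d)
  f : Pt d → Pt d → ℝ
  Mf : ℝ
  Lf : ℝ
  Lfa : ℝ
  Ksrc : Set (Pt d)
  Kdst : Set (Pt d)
  hd : 1 ≤ d
  hΩopen : IsOpen Ω
  hΩbdd : Bornology.IsBounded Ω
  hΩne : Ω.Nonempty
  hfcont : ContinuousOn (fun p : Pt d × Pt d => f p.1 p.2) (closure Ω ×ˢ sphere (0 : Pt d) 1)
  hfpos : ∀ x ∈ closure Ω, ∀ a ∈ sphere (0 : Pt d) 1, 0 < f x a
  hfbdd : ∀ x ∈ closure Ω, ∀ a ∈ sphere (0 : Pt d) 1, f x a ≤ Mf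
  hfLipx : ∀ a ∈ sphere (0 : Pt d) 1, ∀ x ∈ closure Ω, ∀ x' ∈ closure Ω,
    |f x a - f x' a| ≤ Lf * ‖x - x'‖
  hfLipa : ∀ x ∈ closure Ω, ∀ a ∈ sphere (0 : Pt d) 1, ∀ a' ∈ sphere (0 : Pt d) 1,
    |f x a - f x a'| ≤ Lfa * ‖a - a'‖
  hKsrcComp : IsCompact Ksrc
  hKdstComp : IsCompact Kdst
  hKsrcNe : Ksrc.Nonempty
  hKdstNe : Kdst.Nonempty
  hKsrcSub : Ksrc ⊆ Ω
  hKdstSub : Kdst ⊆ Ω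
  hKdisj : Disjoint Ksrc Kdst

namespace Setting

variable {d : ℕ} (S : Setting d)

/-- Minimum time to destination `T_→d`. -/
def Td (x : Pt d) : ℝ≥0∞ := minTime (closure S.Ω) S.f 1 S.Kdst x

/-- Minimum time from source `T_s←` (reverse dynamics). -/
def Ts (x : Pt d) : ℝ≥0∞ := minTime (closure S.Ω) S.f (-1) S.Ksrc x

/-- Value function to destination `v_→d = 1 - e^{-T_→d}`. -/
def vd (x : Pt d) : ℝ := val (closure S.Ω) S.f 1 S.Kdst x

/-- Value function from source `v_s← = 1 - e^{-T_s←}`. -/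
def vs (x : Pt d) : ℝ := val (closure S.Ω) S.f (-1) S.Ksrc x

/-- State-constrained value function to destination: trajectories confined to `K`. -/
def vdC (K : Set (Pt d)) (x : Pt d) : ℝ := val K S.f 1 S.Kdst x

/-- State-constrained value function from source: trajectories confined to `K`. -/
def vsC (K : Set (Pt d)) (x : Pt d) : ℝ := val K S.f (-1) S.Ksrc x

/-- `F_v(x) = v_s←(x) + v_→d(x) − v_s←(x)·v_→d(x)`. -/
def Fv (x : Pt d) : ℝ := S.vs x + S.vd x - S.vs x * S.vd x

/-- The neighborhood `O_η` of the optimal trajectories. -/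
def Oset (η : ℝ) : Set (Pt d) :=
  {x ∈ S.Ω \ (S.Ksrc ∪ S.Kdst) | S.Fv x < sInf (S.Fv '' S.Ω) + η}

/-- `X_src = Argmin_{x ∈ K_src} v_→d(x)`. -/
def Xsrc : Set (Pt d) := {x ∈ S.Ksrc | ∀ z ∈ S.Ksrc, S.vd x ≤ S.vd z}

/-- `X_dst = Argmin_{x ∈ K_dst} v_s←(x)`. -/
def Xdst : Set (Pt d) := {x ∈ S.Kdst | ∀ z ∈ S.Kdst, S.vs x ≤ S.vs z}

/-- The set of forward geodesic points `∪_{x ∈ X_src} Γ*_x`. -/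
def GammaFwd : Set (Pt d) := ⋃ x ∈ S.Xsrc, geodPts (closure S.Ω) S.f 1 S.Kdst x

/-- The set of reverse geodesic points `∪_{x ∈ X_dst} Γ̃*_x`. -/
def GammaRev : Set (Pt d) := ⋃ x ∈ S.Xdst, geodPts (closure S.Ω) S.f (-1) S.Ksrc x

/-- `v* = inf_{x ∈ K_src} v_→d(x)`. -/
def vStar : ℝ := sInf (S.vd '' S.Ksrc)

/-- `X_src^δ = {x ∈ ∂K_src : v_→d(x) ≤ v* + δ}`. -/
def XsrcD (δ : ℝ) : Set (Pt d) := {x ∈ frontier S.Ksrc | S.vd x ≤ S.vStar + δ}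

/-- `X_dst^δ = {x ∈ ∂K_dst : v_s←(x) ≤ v* + δ}`. -/
def XdstD (δ : ℝ) : Set (Pt d) := {x ∈ frontier S.Kdst | S.vs x ≤ S.vStar + δ}

/-- The set of forward δ-geodesic points `Γ^δ`. -/
def GammaD (δ : ℝ) : Set (Pt d) :=
  ⋃ δ' ∈ Icc (0:ℝ) δ, ⋃ x ∈ S.XsrcD (δ - δ'), deltaGeodPts (closure S.Ω) S.f 1 S.Kdst x δ'

/-- The set of reverse δ-geodesic points. -/
def GammaDRev (δ : ℝ) : Set (Pt d) :=
  ⋃ δ' ∈ Icc (0:ℝ) δ, ⋃ x ∈ S.XdstD (δ - δ'), deltaGeodPts (closure S.Ω) S.f (-1) S.Ksrc x δ'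

end Setting

/-!
Reversing a trajectory from `K_src` to `q` and appending a trajectory from `q` to `K_dst` gives
`T_s←(q) + T_→d(q) ≥ T*`, the optimal time from `K_src` to `K_dst`; hence `F_v ≥ v*` everywhere, and
by reversal the optimal time from `K_dst` back to `K_src` is `T*` as well. A point of `X_src` is
approached by the points reached a short time along nearly optimal trajectories from it: they
avoid `K_src ∪ K_dst` and their value of `F_v` is close to `v*`, so they lie in `O_η`; the same
holds for `X_dst` with reverse trajectories. Along an optimal trajectory from `X_src` the two
times add up to `T*`, so a geodesic point either lies in `X_src` or `X_dst`, or lies outside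
`K_src ∪ K_dst` with `F_v = v*`, and is then a limit of points of `O_η` by continuity of `F_v`.
-/

/-- What cutting, shifting, reversing and concatenating trajectories needs from the speed: a bound,
and enough regularity in the direction to make the integrands measurable. -/
structure IsBoundedSpeed {d : ℕ} (K : Set (Pt d)) (f : Pt d → Pt d → ℝ) (M : ℝ) : Prop where
  abs_le : ∀ z ∈ K, ∀ a ∈ sphere (0 : Pt d) 1, |f z a| ≤ M
  continuousOn : ∀ z ∈ K, ContinuousOn (f z) (sphere (0 : Pt d) 1)

theorem integrableOn_Ioc_of_eq_of_not_integrableOn {E : Type*} [NormedAddCommGroup E]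
    {g h : ℝ → E} {τ C : ℝ} (hh : AEStronglyMeasurable h (volume.restrict (Ioc 0 τ)))
    (hgC : ∀ s ∈ Ioc 0 τ, ‖g s‖ ≤ C)
    (hgh : ∀ s ∈ Ioc 0 τ, ¬ IntegrableOn g (Ioc 0 s) → g s = h s) :
    IntegrableOn g (Ioc 0 τ) := by
  by_contra hτ
  set B := {s ∈ Ioc 0 τ | ¬ IntegrableOn g (Ioc 0 s)}
  have hτB : τ ∈ B := ⟨⟨not_le.1 fun h0 => hτ (by simp [Ioc_eq_empty_of_le h0]), le_rfl⟩, hτ⟩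
  set a := sInf B
  have hBbdd : BddBelow B := ⟨0, fun s hs => hs.1.1.le⟩
  have ha0 : 0 ≤ a := le_csInf ⟨τ, hτB⟩ fun s hs => hs.1.1.le
  have haτ : a ≤ τ := csInf_le hBbdd hτB
  have hbelow : ∀ s < a, IntegrableOn g (Ioc 0 s) := fun s hs => by
    by_contra hs'
    rcases le_or_gt s 0 with hs0 | hs0
    · exact hs' (by simp [Ioc_eq_empty_of_le hs0])
    · exact hs.not_ge (csInf_le hBbdd ⟨⟨hs0, (hs.trans_le haτ).le⟩, hs'⟩)
  have habove : ∀ s ∈ Ioc a τ, g s = h s := fun s hs => by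
    obtain ⟨b, hbB, hbs⟩ := exists_lt_of_csInf_lt ⟨τ, hτB⟩ hs.1
    exact hgh s ⟨ha0.trans_lt hs.1, hs.2⟩
      fun hint => hbB.2 (hint.mono_set (Ioc_subset_Ioc_right hbs.le))
  have hloc : LocallyIntegrableOn g (Ioo 0 a) := fun s hs => by
    obtain ⟨m, hsm, hma⟩ := exists_between hs.2
    exact ⟨Ioc 0 m, mem_nhdsWithin.2 ⟨Iio m, isOpen_Iio, hsm, fun z hz => ⟨hz.2.1, hz.1.le⟩⟩,
      hbelow m hma⟩
  have hmeas : AEStronglyMeasurable g (volume.restrict (Ioc 0 τ)) := by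
    rw [← Ioc_union_Ioc_eq_Ioc ha0 haτ, aestronglyMeasurable_union_iff,
      ← Measure.restrict_congr_set Ioo_ae_eq_Ioc]
    refine ⟨hloc.aestronglyMeasurable, (hh.mono_set (Ioc_subset_Ioc_left ha0)).congr ?_⟩
    exact (ae_restrict_iff' measurableSet_Ioc).2 (ae_of_all _ fun s hs => (habove s hs).symm)
  exact hτ (.of_bound (by simp) hmeas C ((ae_restrict_iff' measurableSet_Ioc).2 (ae_of_all _ hgC)))

namespace IsBoundedSpeed

variable {d : ℕ} {K : Set (Pt d)} {f : Pt d → Pt d → ℝ} {M : ℝ}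

theorem norm_smul_le (hf : IsBoundedSpeed K f M) (σ : ℝ) {z a : Pt d} (hz : z ∈ K)
    (ha : ‖a‖ = 1) : ‖(σ * f z a) • a‖ ≤ |σ| * M := by
  rw [norm_smul, ha, mul_one, Real.norm_eq_abs, abs_mul]
  exact mul_le_mul_of_nonneg_left (hf.abs_le z hz a (mem_sphere_zero_iff_norm.2 ha)) (abs_nonneg σ)

theorem measurable_comp (hf : IsBoundedSpeed K f M) {z : Pt d} (hz : z ∈ K) {α : ℝ → Pt d}
    (hα : IsControl α) : Measurable fun s => f z (α s) :=
  (hf.continuousOn z hz).domRestrict.measurable.comp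
    (hα.1.subtype_mk (h := fun s => mem_sphere_zero_iff_norm.2 (hα.2 s)))

end IsBoundedSpeed

namespace IsTrajCtrl

variable {d : ℕ} {K : Set (Pt d)} {f : Pt d → Pt d → ℝ} {M σ τ : ℝ} {x : Pt d} {y α : ℝ → Pt d}

theorem nonneg (h : IsTrajCtrl K f σ x τ y α) : 0 ≤ τ := h.1

theorem apply_zero (h : IsTrajCtrl K f σ x τ y α) : y 0 = x := h.2.1

theorem mem (h : IsTrajCtrl K f σ x τ y α) {t : ℝ} (ht : t ∈ Icc 0 τ) : y t ∈ K := h.2.2.1 t ht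

theorem isControl (h : IsTrajCtrl K f σ x τ y α) : IsControl α := h.2.2.2.1

theorem eq_integral (h : IsTrajCtrl K f σ x τ y α) {t : ℝ} (ht : t ∈ Icc 0 τ) :
    y t = x + ∫ s in (0 : ℝ)..t, (σ * f (y s) (α s)) • α s :=
  h.2.2.2.2 t ht

theorem norm_integrand_le (hf : IsBoundedSpeed K f M) (h : IsTrajCtrl K f σ x τ y α) {s : ℝ}
    (hs : s ∈ Icc 0 τ) : ‖(σ * f (y s) (α s)) • α s‖ ≤ |σ| * M :=
  hf.norm_smul_le σ (h.mem hs) (h.isControl.2 s)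

theorem integrableOn (hf : IsBoundedSpeed K f M) (h : IsTrajCtrl K f σ x τ y α) :
    IntegrableOn (fun s => (σ * f (y s) (α s)) • α s) (Ioc 0 τ) := by
  have hxK : x ∈ K := h.apply_zero ▸ h.mem (left_mem_Icc.2 h.nonneg)
  refine integrableOn_Ioc_of_eq_of_not_integrableOn (h := fun s => (σ * f x (α s)) • α s)
    ((measurable_const.mul (hf.measurable_comp hxK h.isControl)).smul
      h.isControl.1).aestronglyMeasurable
    (fun s hs => h.norm_integrand_le hf ⟨hs.1.le, hs.2⟩) fun s hs hs' => ?_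
  -- the integral up to `s` takes its junk value `0`, so the trajectory is still at `x`
  have hys : y s = x := by
    rw [h.eq_integral ⟨hs.1.le, hs.2⟩, intervalIntegral.integral_undef, add_zero]
    rwa [intervalIntegrable_iff_integrableOn_Ioc_of_le hs.1.le]
  simp only [hys]

theorem intervalIntegrable (hf : IsBoundedSpeed K f M) (h : IsTrajCtrl K f σ x τ y α)
    {t₁ t₂ : ℝ} (h₁ : t₁ ∈ Icc 0 τ) (h₂ : t₂ ∈ Icc 0 τ) :
    IntervalIntegrable (fun s => (σ * f (y s) (α s)) • α s) volume t₁ t₂ :=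
  intervalIntegrable_iff.2 ((h.integrableOn hf).mono_set
    (Ioc_subset_Ioc (le_min h₁.1 h₂.1) (max_le h₁.2 h₂.2)))

theorem eq_add_integral (hf : IsBoundedSpeed K f M) (h : IsTrajCtrl K f σ x τ y α)
    {t₁ t₂ : ℝ} (h₁ : t₁ ∈ Icc 0 τ) (h₂ : t₂ ∈ Icc 0 τ) :
    y t₂ = y t₁ + ∫ s in t₁..t₂, (σ * f (y s) (α s)) • α s := by
  have h₀ := left_mem_Icc.2 h.nonneg
  rw [← intervalIntegral.integral_interval_sub_left (h.intervalIntegrable hf h₀ h₂)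
    (h.intervalIntegrable hf h₀ h₁), h.eq_integral h₂, h.eq_integral h₁]
  abel

theorem norm_sub_le (hf : IsBoundedSpeed K f M) (h : IsTrajCtrl K f σ x τ y α) {t : ℝ}
    (ht : t ∈ Icc 0 τ) : ‖y t - x‖ ≤ |σ| * M * t := by
  have := intervalIntegral.norm_integral_le_of_norm_le_const fun s hs =>
    h.norm_integrand_le hf (uIcc_subset_Icc (left_mem_Icc.2 h.nonneg) ht (uIoc_subset_uIcc hs))
  rw [sub_zero, abs_of_nonneg ht.1] at this
  rwa [h.eq_integral ht, add_sub_cancel_left]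

theorem restrict (h : IsTrajCtrl K f σ x τ y α) {t : ℝ} (ht : t ∈ Icc 0 τ) :
    IsTrajCtrl K f σ x t y α :=
  ⟨ht.1, h.apply_zero, fun _ hs => h.mem ⟨hs.1, hs.2.trans ht.2⟩, h.isControl,
    fun _ hs => h.eq_integral ⟨hs.1, hs.2.trans ht.2⟩⟩

theorem shift (hf : IsBoundedSpeed K f M) (h : IsTrajCtrl K f σ x τ y α) {t : ℝ}
    (ht : t ∈ Icc 0 τ) :
    IsTrajCtrl K f σ (y t) (τ - t) (fun s => y (t + s)) (fun s => α (t + s)) := by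
  have hts : ∀ s ∈ Icc 0 (τ - t), t + s ∈ Icc 0 τ := fun s hs =>
    ⟨add_nonneg ht.1 hs.1, by linarith [hs.2]⟩
  refine ⟨sub_nonneg.2 ht.2, by simp, fun s hs => h.mem (hts s hs),
    ⟨h.isControl.1.comp (measurable_const_add t), fun s => h.isControl.2 _⟩, fun s hs => ?_⟩
  dsimp only
  rw [h.eq_add_integral hf ht (hts s hs),
    intervalIntegral.integral_comp_add_left (fun u => (σ * f (y u) (α u)) • α u) t, add_zero]

theorem reverse (hf : IsBoundedSpeed K f M) (h : IsTrajCtrl K f σ x τ y α) :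
    IsTrajCtrl K f (-σ) (y τ) τ (fun s => y (τ - s)) (fun s => α (τ - s)) := by
  refine ⟨h.nonneg, by simp, fun s hs => h.mem ⟨sub_nonneg.2 hs.2, sub_le_self _ hs.1⟩,
    ⟨h.isControl.1.comp (measurable_const_sub τ), fun s => h.isControl.2 _⟩, fun s hs => ?_⟩
  simp only [neg_mul, neg_smul, intervalIntegral.integral_neg,
    intervalIntegral.integral_comp_sub_left (fun u => (σ * f (y u) (α u)) • α u) τ, sub_zero]
  rw [← intervalIntegral.integral_symm, h.eq_add_integral hf (right_mem_Icc.2 h.nonneg)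
    ⟨sub_nonneg.2 hs.2, sub_le_self _ hs.1⟩]

variable {τ₁ τ₂ : ℝ} {y₁ α₁ y₂ α₂ : ℝ → Pt d}

theorem append (hf : IsBoundedSpeed K f M) (h₁ : IsTrajCtrl K f σ x τ₁ y₁ α₁)
    (h₂ : IsTrajCtrl K f σ (y₁ τ₁) τ₂ y₂ α₂) :
    IsTrajCtrl K f σ x (τ₁ + τ₂) (fun t => if t ≤ τ₁ then y₁ t else y₂ (t - τ₁))
      (fun t => if t ≤ τ₁ then α₁ t else α₂ (t - τ₁)) := by
  set z : ℝ → Pt d := fun t => if t ≤ τ₁ then y₁ t else y₂ (t - τ₁)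
  set β : ℝ → Pt d := fun t => if t ≤ τ₁ then α₁ t else α₂ (t - τ₁)
  set G : ℝ → Pt d := fun s => (σ * f (z s) (β s)) • β s
  have hG₁ : ∀ s ≤ τ₁, G s = (σ * f (y₁ s) (α₁ s)) • α₁ s := fun s hs => by
    simp only [G, z, β, if_pos hs]
  have hG₂ : ∀ s, τ₁ < s → G s = (σ * f (y₂ (s - τ₁)) (α₂ (s - τ₁))) • α₂ (s - τ₁) :=
    fun s hs => by simp only [G, z, β, if_neg hs.not_ge]
  refine ⟨add_nonneg h₁.nonneg h₂.nonneg, by simp [z, h₁.nonneg, h₁.apply_zero], fun t ht => ?_,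
    ⟨h₁.isControl.1.ite measurableSet_Iic (h₂.isControl.1.comp (measurable_sub_const τ₁)),
      fun t => ?_⟩, fun t ht => ?_⟩
  · simp only [z]
    split_ifs with htτ
    exacts [h₁.mem ⟨ht.1, htτ⟩, h₂.mem ⟨by linarith, by linarith [ht.2]⟩]
  · simp only [β]
    split_ifs
    exacts [h₁.isControl.2 t, h₂.isControl.2 _]
  change z t = x + ∫ s in (0 : ℝ)..t, G s
  rcases le_or_gt t τ₁ with htτ | htτ
  · rw [show z t = y₁ t from if_pos htτ, h₁.eq_integral ⟨ht.1, htτ⟩,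
      intervalIntegral.integral_congr fun s hs => (hG₁ s ?_).symm]
    exact (uIcc_of_le ht.1 ▸ hs).2.trans htτ
  have hI₁ : IntervalIntegrable G volume 0 τ₁ :=
    (h₁.intervalIntegrable hf (left_mem_Icc.2 h₁.nonneg) (right_mem_Icc.2 h₁.nonneg)).congr
      fun s hs => (hG₁ s ((uIoc_of_le h₁.nonneg ▸ hs).2)).symm
  have hI₂ : IntervalIntegrable G volume τ₁ t := by
    have := (h₂.intervalIntegrable hf (left_mem_Icc.2 h₂.nonneg) (t₂ := t - τ₁)
      ⟨by linarith, by linarith [ht.2]⟩).comp_sub_right τ₁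
    rw [zero_add, sub_add_cancel] at this
    exact this.congr fun s hs => (hG₂ s (uIoc_of_le htτ.le ▸ hs).1).symm
  have hshift : ∫ s in τ₁..t, G s = ∫ s in (0 : ℝ)..t - τ₁, (σ * f (y₂ s) (α₂ s)) • α₂ s := by
    rw [intervalIntegral.integral_congr_ae (ae_of_all _ fun s hs =>
        hG₂ s (uIoc_of_le htτ.le ▸ hs).1),
      intervalIntegral.integral_comp_sub_right (fun u => (σ * f (y₂ u) (α₂ u)) • α₂ u), sub_self]
  have hhead : ∫ s in (0 : ℝ)..τ₁, G s = ∫ s in (0 : ℝ)..τ₁, (σ * f (y₁ s) (α₁ s)) • α₁ s :=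
    intervalIntegral.integral_congr fun s hs => hG₁ s (uIcc_of_le h₁.nonneg ▸ hs).2
  rw [show z t = y₂ (t - τ₁) from if_neg htτ.not_ge,
    ← intervalIntegral.integral_add_adjacent_intervals hI₁ hI₂, hshift, hhead,
    h₂.eq_integral ⟨by linarith, by linarith [ht.2]⟩, h₁.eq_integral (right_mem_Icc.2 h₁.nonneg),
    add_assoc]

end IsTrajCtrl

def optTime {d : ℕ} (K : Set (Pt d)) (f : Pt d → Pt d → ℝ) (σ : ℝ) (A B : Set (Pt d)) : ℝ≥0∞ :=
  ⨅ a ∈ A, minTime K f σ B a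

section MinTime

variable {d : ℕ} {K A B : Set (Pt d)} {f : Pt d → Pt d → ℝ} {M σ τ : ℝ} {x : Pt d}
  {y α : ℝ → Pt d}

theorem IsTrajCtrl.minTime_le (h : IsTrajCtrl K f σ x τ y α) (hy : y τ ∈ B) :
    minTime K f σ B x ≤ ENNReal.ofReal τ :=
  iInf₂_le τ ⟨y, ⟨α, h⟩, hy⟩

theorem exists_isTrajCtrl_of_minTime_lt {c : ℝ≥0∞} (h : minTime K f σ B x < c) :
    ∃ τ y α, IsTrajCtrl K f σ x τ y α ∧ y τ ∈ B ∧ ENNReal.ofReal τ < c := by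
  obtain ⟨τ, hτ⟩ := iInf_lt_iff.1 h
  obtain ⟨⟨y, ⟨α, hy⟩, hyB⟩, hτc⟩ := iInf_lt_iff.1 hτ
  exact ⟨τ, y, α, hy, hyB, hτc⟩

theorem IsTrajCtrl.minTime_neg_le (hf : IsBoundedSpeed K f M) (h : IsTrajCtrl K f σ x τ y α)
    (hx : x ∈ A) {t : ℝ} (ht : t ∈ Icc 0 τ) :
    minTime K f (-σ) A (y t) ≤ ENNReal.ofReal t :=
  ((h.restrict ht).reverse hf).minTime_le (by simpa [h.apply_zero] using hx)

theorem IsTrajCtrl.minTime_le_sub (hf : IsBoundedSpeed K f M) (h : IsTrajCtrl K f σ x τ y α)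
    (hy : y τ ∈ B) {t : ℝ} (ht : t ∈ Icc 0 τ) :
    minTime K f σ B (y t) ≤ ENNReal.ofReal (τ - t) :=
  (h.shift hf ht).minTime_le (by simpa using hy)

/-- Running backwards to `A` and then forwards to `B` is a trajectory from `A` to `B`. -/
theorem optTime_le_minTime_neg_add_minTime (hf : IsBoundedSpeed K f M) (q : Pt d) :
    optTime K f σ A B ≤ minTime K f (-σ) A q + minTime K f σ B q := by
  refine ENNReal.le_iInf_add_iInf fun τ₁ τ₂ => ENNReal.le_iInf_add_iInf fun hτ₁ hτ₂ => ?_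
  obtain ⟨y₁, ⟨α₁, h₁⟩, hy₁⟩ := hτ₁
  obtain ⟨y₂, ⟨α₂, h₂⟩, hy₂⟩ := hτ₂
  have hrev := h₁.reverse hf
  rw [neg_neg] at hrev
  have hcat := hrev.append hf (by simpa [h₁.apply_zero] using h₂)
  calc optTime K f σ A B ≤ minTime K f σ B (y₁ τ₁) := iInf₂_le _ hy₁
    _ ≤ ENNReal.ofReal (τ₁ + τ₂) := hcat.minTime_le ?_
    _ = ENNReal.ofReal τ₁ + ENNReal.ofReal τ₂ := ENNReal.ofReal_add h₁.nonneg h₂.nonneg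
  split_ifs with hle
  · obtain rfl : τ₂ = 0 := le_antisymm (by linarith) h₂.nonneg
    simpa [h₁.apply_zero, h₂.apply_zero] using hy₂
  · simpa using hy₂

theorem optTime_le_optTime_neg (hf : IsBoundedSpeed K f M) :
    optTime K f σ A B ≤ optTime K f (-σ) B A := by
  refine le_iInf₂ fun b hb => le_iInf₂ fun τ ⟨y, ⟨α, h⟩, hy⟩ => ?_
  have hrev := h.reverse hf
  rw [neg_neg] at hrev
  exact (iInf₂_le _ hy).trans (hrev.minTime_le (by simpa [h.apply_zero] using hb))

theorem optTime_neg (hf : IsBoundedSpeed K f M) : optTime K f (-σ) B A = optTime K f σ A B :=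
  le_antisymm (by simpa using optTime_le_optTime_neg (σ := -σ) (A := B) (B := A) hf)
    (optTime_le_optTime_neg hf)

/-- The points approaching `x` are taken a short time along nearly optimal trajectories from `x`;
they leave `A` because they reach `B` faster than the minimiser `x` does. -/
theorem mem_closure_minTime_neg_add_minTime_le {U : Set (Pt d)} (hf : IsBoundedSpeed K f M)
    (hU : IsOpen U) (hB : IsClosed B) (hxU : x ∈ U) (hxA : x ∈ A) (hxB : x ∉ B)
    (hmin : ∀ a ∈ A, minTime K f σ B x ≤ minTime K f σ B a) (hfin : minTime K f σ B x ≠ ⊤)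
    {δ : ℝ} (hδ : 0 < δ) :
    x ∈ closure {q ∈ U \ (A ∪ B) | minTime K f (-σ) A q + minTime K f σ B q ≤
      minTime K f σ B x + ENNReal.ofReal δ} := by
  refine Metric.mem_closure_iff.2 fun ε hε => ?_
  obtain ⟨r, hr, hrUB⟩ := Metric.isOpen_iff.1 (hU.inter hB.isOpen_compl) x ⟨hxU, hxB⟩
  set C := |σ| * |M|
  obtain ⟨c, hc, hcr⟩ := exists_pos_mul_lt (lt_min hε hr) C
  set t := min c δ
  have ht : 0 < t := lt_min hc hδ
  have hCt : C * t < min ε r :=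
    (mul_le_mul_of_nonneg_left (min_le_left _ _) (by positivity)).trans_lt hcr
  obtain ⟨τ, y, α, h, hyB, hτ⟩ :=
    exists_isTrajCtrl_of_minTime_lt (ENNReal.lt_add_right hfin (ENNReal.ofReal_pos.2 ht).ne')
  have hdist : ∀ s ∈ Icc 0 τ, dist (y s) x ≤ C * s := fun s hs => by
    rw [dist_eq_norm]
    exact (h.norm_sub_le hf hs).trans
      (mul_le_mul_of_nonneg_right (mul_le_mul_of_nonneg_left (le_abs_self M) (abs_nonneg σ)) hs.1)
  have htτ : t ≤ τ := by
    by_contra! hτt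
    refine (hrUB (mem_ball.2 ?_)).2 hyB
    calc dist (y τ) x ≤ C * τ := hdist τ (right_mem_Icc.2 h.nonneg)
      _ ≤ C * t := mul_le_mul_of_nonneg_left hτt.le (by positivity)
      _ < r := hCt.trans_le (min_le_right _ _)
  have htI : t ∈ Icc 0 τ := ⟨ht.le, htτ⟩
  have hq : dist (y t) x < min ε r := (hdist t htI).trans_lt hCt
  have hqUB : y t ∈ U ∩ Bᶜ := hrUB (mem_ball.2 (hq.trans_le (min_le_right _ _)))
  have hsplit : ENNReal.ofReal τ = ENNReal.ofReal (τ - t) + ENNReal.ofReal t := by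
    rw [← ENNReal.ofReal_add (sub_nonneg.2 htτ) ht.le, sub_add_cancel]
  have hTB := h.minTime_le_sub hf hyB htI
  have hlt : minTime K f σ B (y t) < minTime K f σ B x :=
    hTB.trans_lt ((ENNReal.add_lt_add_iff_right ENNReal.ofReal_ne_top).1 (hsplit ▸ hτ))
  refine ⟨y t, ⟨⟨hqUB.1, ?_⟩, ?_⟩, dist_comm x (y t) ▸ hq.trans_le (min_le_left _ _)⟩
  · rintro (hqA | hqB)
    exacts [(hmin _ hqA).not_gt hlt, hqUB.2 hqB]
  calc minTime K f (-σ) A (y t) + minTime K f σ B (y t)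
      ≤ ENNReal.ofReal t + ENNReal.ofReal (τ - t) := add_le_add (h.minTime_neg_le hf hxA htI) hTB
    _ = ENNReal.ofReal τ := by rw [hsplit, add_comm]
    _ ≤ minTime K f σ B x + ENNReal.ofReal t := hτ.le
    _ ≤ minTime K f σ B x + ENNReal.ofReal δ := by gcongr; exact min_le_right _ _

end MinTime

theorem kruzkov_strictMono : StrictMono kruzkov := by
  intro T T' hTT'
  have hT : T ≠ ⊤ := hTT'.ne_top
  unfold kruzkov
  rw [if_neg hT]
  split_ifs with hT'
  · linarith [Real.exp_pos (-T.toReal)]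
  · have := (ENNReal.toReal_lt_toReal hT hT').2 hTT'
    linarith [Real.exp_lt_exp.2 (neg_lt_neg this)]

theorem kruzkov_add (T T' : ℝ≥0∞) :
    kruzkov (T + T') = kruzkov T + kruzkov T' - kruzkov T * kruzkov T' := by
  rcases eq_or_ne T ⊤ with rfl | hT
  · simp [kruzkov]
  rcases eq_or_ne T' ⊤ with rfl | hT'
  · simp [kruzkov]
  simp only [kruzkov, if_neg hT, if_neg hT', if_neg (ENNReal.add_ne_top.2 ⟨hT, hT'⟩),
    ENNReal.toReal_add hT hT', neg_add, Real.exp_add]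
  ring

theorem kruzkov_add_ofReal_le (T : ℝ≥0∞) {δ : ℝ} (hδ : 0 ≤ δ) :
    kruzkov (T + ENNReal.ofReal δ) ≤ kruzkov T + δ := by
  have hk : ∀ T, 0 ≤ kruzkov T := fun T => by
    simpa [kruzkov] using kruzkov_strictMono.monotone (zero_le : 0 ≤ T)
  have hkδ : kruzkov (ENNReal.ofReal δ) ≤ δ := by
    rw [kruzkov, if_neg ENNReal.ofReal_ne_top, ENNReal.toReal_ofReal hδ]
    linarith [Real.add_one_le_exp (-δ)]
  rw [kruzkov_add]
  nlinarith [mul_nonneg (hk T) (hk (ENNReal.ofReal δ))]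

theorem mem_frontier_inter_frontier {X : Type*} [TopologicalSpace X] {U K : Set X} {x : X}
    (hxK : x ∈ K) (hxU : x ∈ closure U) (hUK : Disjoint U K) : x ∈ frontier U ∩ frontier K :=
  ⟨⟨hxU, fun hx => disjoint_left.1 hUK (interior_subset hx) hxK⟩,
    ⟨subset_closure hxK, fun hx => disjoint_left.1
      ((hUK.mono_right interior_subset).closure_left isOpen_interior) hxU hx⟩⟩

theorem mem_closure_sep_lt_of_continuousOn {X α : Type*} [TopologicalSpace X]
    [TopologicalSpace α] [LinearOrder α] [OrderClosedTopology α] {U C : Set X} {F : X → α}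
    {c : α} {p : X} (hF : ContinuousOn F (closure U)) (hp : p ∈ closure U) (hC : IsClosed C)
    (hpC : p ∉ C) (hFp : F p < c) : p ∈ closure {q ∈ U \ C | F q < c} := by
  obtain ⟨V, hV, hVF⟩ := continuousOn_iff'.1 hF (Iio c) isOpen_Iio
  have hpV : p ∈ V := (hVF.subset ⟨hFp, hp⟩).1
  refine closure_mono ?_ ((hV.inter hC.isOpen_compl).inter_closure ⟨⟨hpV, hpC⟩, hp⟩)
  rintro q ⟨⟨hqV, hqC⟩, hqU⟩
  exact ⟨⟨hqU, hqC⟩, (hVF.symm.subset ⟨hqV, subset_closure hqU⟩).1⟩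

namespace Setting

variable {d : ℕ} (S : Setting d)

/-- The optimal time `T*` from `K_src` to `K_dst`, so that `v* = 1 - e^{-T*}`. -/
def Topt : ℝ≥0∞ := optTime (closure S.Ω) S.f 1 S.Ksrc S.Kdst

theorem isBoundedSpeed : IsBoundedSpeed (closure S.Ω) S.f S.Mf where
  abs_le _ hz a ha := (abs_of_pos (S.hfpos _ hz a ha)).trans_le (S.hfbdd _ hz a ha)
  continuousOn _ hz :=
    S.hfcont.comp (continuous_const.prodMk continuous_id).continuousOn fun _ ha => ⟨hz, ha⟩

theorem Fv_eq (q : Pt d) : S.Fv q = kruzkov (S.Ts q + S.Td q) := (kruzkov_add _ _).symm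

theorem kruzkov_Topt_le_sInf_Fv : kruzkov S.Topt ≤ sInf (S.Fv '' S.Ω) := by
  refine le_csInf (S.hΩne.image _) ?_
  rintro _ ⟨q, -, rfl⟩
  rw [Fv_eq]
  exact kruzkov_strictMono.monotone (optTime_le_minTime_neg_add_minTime S.isBoundedSpeed q)

theorem mem_Xsrc_iff {x : Pt d} : x ∈ S.Xsrc ↔ x ∈ S.Ksrc ∧ S.Td x ≤ S.Topt := by
  simp only [Xsrc, vd, val, mem_ofPred_eq, kruzkov_strictMono.le_iff_le, Topt, optTime,
    le_iInf₂_iff, Td]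

theorem optTime_Kdst_Ksrc : optTime (closure S.Ω) S.f (-1) S.Kdst S.Ksrc = S.Topt :=
  optTime_neg S.isBoundedSpeed

theorem mem_Xdst_iff {x : Pt d} : x ∈ S.Xdst ↔ x ∈ S.Kdst ∧ S.Ts x ≤ S.Topt := by
  rw [← optTime_Kdst_Ksrc]
  simp only [Xdst, vs, val, mem_ofPred_eq, kruzkov_strictMono.le_iff_le, optTime, le_iInf₂_iff,
    Ts]

theorem Topt_ne_top (hne : S.GammaFwd.Nonempty) : S.Topt ≠ ⊤ := by
  obtain ⟨p, hp⟩ := hne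
  simp only [GammaFwd, mem_iUnion] at hp
  obtain ⟨x, hx, τ, -, -, -, hτ, -⟩ := hp
  exact ((iInf₂_le x hx.1 : S.Topt ≤ S.Td x).trans_lt (hτ ▸ ENNReal.ofReal_lt_top)).ne

theorem sep_subset_Oset {η δ : ℝ} (hδ : 0 ≤ δ) (hδη : δ < η) :
    {q ∈ S.Ω \ (S.Ksrc ∪ S.Kdst) | S.Ts q + S.Td q ≤ S.Topt + ENNReal.ofReal δ} ⊆ S.Oset η :=
  fun q ⟨hq, hqT⟩ => ⟨hq, calc
    S.Fv q = kruzkov (S.Ts q + S.Td q) := S.Fv_eq q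
    _ ≤ kruzkov (S.Topt + ENNReal.ofReal δ) := kruzkov_strictMono.monotone hqT
    _ ≤ kruzkov S.Topt + δ := kruzkov_add_ofReal_le _ hδ
    _ < sInf (S.Fv '' S.Ω) + η := by linarith [S.kruzkov_Topt_le_sInf_Fv]⟩

theorem Xsrc_subset_closure_Oset (hfin : S.Topt ≠ ⊤) {η : ℝ} (hη : 0 < η) :
    S.Xsrc ⊆ closure (S.Oset η) := by
  intro x hx
  obtain ⟨hxK, hxT⟩ := S.mem_Xsrc_iff.1 hx
  have hle : ∀ a ∈ S.Ksrc, S.Topt ≤ S.Td a := fun a ha => iInf₂_le a ha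
  have hTx : S.Td x = S.Topt := le_antisymm hxT (hle x hxK)
  have hcl := mem_closure_minTime_neg_add_minTime_le S.isBoundedSpeed S.hΩopen
    S.hKdstComp.isClosed (S.hKsrcSub hxK) hxK (disjoint_left.1 S.hKdisj hxK)
    (fun a ha => hTx.trans_le (hle a ha)) (hTx.trans_ne hfin) (half_pos hη)
  refine closure_mono (fun q hq => S.sep_subset_Oset (half_pos hη).le (half_lt_self hη)
    ⟨hq.1, hq.2.trans (add_le_add hTx.le le_rfl)⟩) hcl

theorem Xdst_subset_closure_Oset (hfin : S.Topt ≠ ⊤) {η : ℝ} (hη : 0 < η) :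
    S.Xdst ⊆ closure (S.Oset η) := by
  intro x hx
  obtain ⟨hxK, hxT⟩ := S.mem_Xdst_iff.1 hx
  have hle : ∀ a ∈ S.Kdst, S.Topt ≤ S.Ts a := fun a ha => S.optTime_Kdst_Ksrc ▸ iInf₂_le a ha
  have hTx : S.Ts x = S.Topt := le_antisymm hxT (hle x hxK)
  have hcl := mem_closure_minTime_neg_add_minTime_le S.isBoundedSpeed S.hΩopen
    S.hKsrcComp.isClosed (S.hKdstSub hxK) hxK (disjoint_right.1 S.hKdisj hxK)
    (fun a ha => hTx.trans_le (hle a ha)) (hTx.trans_ne hfin) (half_pos hη)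
  refine closure_mono ?_ hcl
  rintro q ⟨⟨hqΩ, hqK⟩, hqT⟩
  rw [neg_neg] at hqT
  refine S.sep_subset_Oset (half_pos hη).le (half_lt_self hη) ⟨⟨hqΩ, by rwa [union_comm]⟩, ?_⟩
  exact (add_comm _ _).trans_le (hqT.trans (add_le_add hTx.le le_rfl))

theorem GammaFwd_subset_closure_Oset (hvd : ContinuousOn S.vd (closure S.Ω))
    (hvs : ContinuousOn S.vs (closure S.Ω)) {η : ℝ} (hη : 0 < η) :
    S.GammaFwd ⊆ closure (S.Oset η) := by
  intro p hp
  have hfin := S.Topt_ne_top ⟨p, hp⟩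
  simp only [GammaFwd, mem_iUnion] at hp
  obtain ⟨x, hx, τ, y, ⟨α, h⟩, hyB, hτ, t, ht, rfl⟩ := hp
  obtain ⟨hxK, hxT⟩ := S.mem_Xsrc_iff.1 hx
  have hτT : ENNReal.ofReal τ ≤ S.Topt := hτ.trans_le hxT
  have hTs : S.Ts (y t) ≤ ENNReal.ofReal t := h.minTime_neg_le S.isBoundedSpeed hxK ht
  have hTd : S.Td (y t) ≤ ENNReal.ofReal (τ - t) := h.minTime_le_sub S.isBoundedSpeed hyB ht
  by_cases hsrc : y t ∈ S.Ksrc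
  · refine S.Xsrc_subset_closure_Oset hfin hη (S.mem_Xsrc_iff.2 ⟨hsrc, hTd.trans ?_⟩)
    exact (ENNReal.ofReal_le_ofReal (sub_le_self _ ht.1)).trans hτT
  by_cases hdst : y t ∈ S.Kdst
  · refine S.Xdst_subset_closure_Oset hfin hη (S.mem_Xdst_iff.2 ⟨hdst, hTs.trans ?_⟩)
    exact (ENNReal.ofReal_le_ofReal ht.2).trans hτT
  have hFv : ContinuousOn S.Fv (closure S.Ω) := (hvs.add hvd).sub (hvs.mul hvd)
  refine mem_closure_sep_lt_of_continuousOn hFv (h.mem ht)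
    (S.hKsrcComp.isClosed.union S.hKdstComp.isClosed) (not_or.2 ⟨hsrc, hdst⟩) ?_
  have hsum : S.Ts (y t) + S.Td (y t) ≤ S.Topt := by
    refine (add_le_add hTs hTd).trans (le_of_eq_of_le ?_ hτT)
    rw [← ENNReal.ofReal_add ht.1 (sub_nonneg.2 ht.2), add_sub_cancel]
  calc S.Fv (y t) = kruzkov (S.Ts (y t) + S.Td (y t)) := S.Fv_eq _
    _ ≤ kruzkov S.Topt := kruzkov_strictMono.monotone hsum
    _ < sInf (S.Fv '' S.Ω) + η := by linarith [S.kruzkov_Topt_le_sInf_Fv]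

end Setting

/-- If `Γ*` is nonempty then for every `η > 0`, `X_src ⊆ ∂O_η ∩ ∂K_src`,
`X_dst ⊆ ∂O_η ∩ ∂K_dst`, and `Γ* ⊆ cl(O_η)`. -/
theorem argmin_subset_frontier_Oset {d : ℕ} (S : Setting d)
    (hvd : ContinuousOn S.vd (closure S.Ω)) (hvs : ContinuousOn S.vs (closure S.Ω))
    (hne : S.GammaFwd.Nonempty) :
    ∀ η : ℝ, 0 < η →
      S.Xsrc ⊆ frontier (S.Oset η) ∩ frontier S.Ksrc ∧
      S.Xdst ⊆ frontier (S.Oset η) ∩ frontier S.Kdst ∧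
      S.GammaFwd ⊆ closure (S.Oset η) := by
  intro η hη
  have hfin := S.Topt_ne_top hne
  refine ⟨fun x hx => mem_frontier_inter_frontier hx.1 (S.Xsrc_subset_closure_Oset hfin hη hx)
      (disjoint_left.2 fun q hq hqK => hq.1.2 (Or.inl hqK)),
    fun x hx => mem_frontier_inter_frontier hx.1 (S.Xdst_subset_closure_Oset hfin hη hx)
      (disjoint_left.2 fun q hq hqK => hq.1.2 (Or.inr hqK)),
    S.GammaFwd_subset_closure_Oset hvd hvs hη⟩
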